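/- Let m > 2, s ∈ (0,1), and let p, q, r ∈ (1, ∞) satisfy 1/p = 1/q + 1/r. There exists a constant C > 0, depending only on m, such that for every measurable f : ℝ² → ℝ with f ∈ L^q(ℝ²) ∩ L^{r(m-2)}(ℝ²), writing F(y) = |f(y)|^{m-2} f(y), one has ∫_{ℝ²} ‖F(· + x) - F(·)‖_{L^p(ℝ²)}^p / |x|^{2 + s p} dx ≤ C^p ‖f‖_{L^{r(m-2)}(ℝ²)}^{(m-2)p} ∫_{ℝ²} ‖f(· + x) - f(·)‖_{L^q(ℝ²)}^p / |x|^{2 + s p} dx. -/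

import Mathlib

/-!
The map `t ↦ |t|^k t` (`k = m - 2`) has derivative `(k+1)|t|^k`, so pointwise
`|F(y+x) - F(y)| ≤ (k+1)(|f(y+x)|^k + |f(y)|^k) |f(y+x) - f(y)|`.
Hölder's inequality with `1/p = 1/r + 1/q` and translation invariance of Lebesgue measure
bound the `L^p` norm of the left side by `2(k+1) ‖f‖_{L^{rk}}^k ‖f(·+x) - f‖_{L^q}` for every
shift `x`; raising to the power `p` and integrating against `|x|^{-(2+sp)}` gives the estimate
with `C = 2(m-1)`.
-/

open MeasureTheory

namespace Real

theorem rpow_add_one_sub_rpow_add_one_le {k a b : ℝ} (hk : 0 ≤ k) (hb : 0 ≤ b) (hba : b ≤ a) :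
    a ^ (k + 1) - b ^ (k + 1) ≤ (k + 1) * a ^ k * (a - b) := by
  obtain rfl | ha := (hb.trans hba).eq_or_lt
  · obtain rfl : b = 0 := le_antisymm hba hb
    simp
  -- Bernoulli's inequality for `(b / a) ^ (k + 1)`, multiplied by `a ^ (k + 1)`.
  have bernoulli := one_add_mul_self_le_rpow_one_add (s := b / a - 1) (p := k + 1)
    (by linarith [div_nonneg hb ha.le]) (by linarith)
  have hpow : a ^ (k + 1) * (b / a) ^ (k + 1) = b ^ (k + 1) := by
    rw [← mul_rpow ha.le (div_nonneg hb ha.le), mul_div_cancel₀ _ ha.ne']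
  have hlin : a ^ (k + 1) * (1 + (k + 1) * (b / a - 1)) =
      a ^ (k + 1) - (k + 1) * a ^ k * (a - b) := by
    rw [rpow_add_one ha.ne']; field_simp; ring
  have := mul_le_mul_of_nonneg_left bernoulli (rpow_nonneg ha.le (k + 1))
  rw [add_sub_cancel, hpow, hlin] at this
  linarith

theorem abs_abs_rpow_mul_sub_abs_rpow_mul_le {k : ℝ} (hk : 0 ≤ k) (a b : ℝ) :
    |(|a| ^ k * a) - (|b| ^ k * b)| ≤ (k + 1) * (|a| ^ k + |b| ^ k) * |a - b| := by
  wlog hab : |b| ≤ |a| generalizing a b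
  · rw [abs_sub_comm, abs_sub_comm a, add_comm (|a| ^ k)]
    exact this b a (le_of_not_ge hab)
  wlog ha : 0 ≤ a generalizing a b
  · have h := this (-a) (-b) (by simpa) (by linarith [abs_nonneg a, abs_of_neg (not_le.1 ha)])
    rw [abs_neg, abs_neg, neg_sub_neg, abs_sub_comm b a] at h
    rwa [show |a| ^ k * -a - |b| ^ k * -b = -(|a| ^ k * a - |b| ^ k * b) by ring, abs_neg] at h
  have hA : 0 ≤ a ^ k := rpow_nonneg ha k
  have hB : 0 ≤ |b| ^ k := rpow_nonneg (abs_nonneg b) k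
  rw [abs_of_nonneg ha] at hab ⊢
  rcases le_total 0 b with hb | hb
  · rw [abs_of_nonneg hb] at hab hB ⊢
    rw [abs_of_nonneg (sub_nonneg.2 hab), abs_of_nonneg (sub_nonneg.2 (by gcongr)),
      ← rpow_add_one' ha (by linarith), ← rpow_add_one' hb (by linarith)]
    nlinarith [rpow_add_one_sub_rpow_add_one_le hk hb hab, mul_nonneg hB (sub_nonneg.2 hab)]
  · rw [abs_of_nonpos hb] at hab hB ⊢
    -- Opposite signs: the difference is a sum of two nonnegative terms.
    rw [abs_of_nonneg (a := a ^ k * a - (-b) ^ k * b) (by nlinarith),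
      abs_of_nonneg (a := a - b) (by linarith)]
    nlinarith [mul_nonneg hA (neg_nonneg.2 hb), mul_nonneg hB ha,
      mul_nonneg (mul_nonneg hk (add_nonneg hA hB)) (sub_nonneg.2 (hb.trans ha))]

end Real

open scoped ENNReal

section Lp

variable {α : Type*} [MeasurableSpace α] {μ : Measure α}

theorem eLpNorm_abs_rpow_mul_sub_le {k : ℝ} (hk : 0 < k) {p q r : ℝ≥0∞}
    [ENNReal.HolderTriple r q p] (hr : 1 ≤ r) {u v : α → ℝ}
    (hu : AEStronglyMeasurable u μ) (hv : AEStronglyMeasurable v μ) :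
    eLpNorm (fun y => |u y| ^ k * u y - |v y| ^ k * v y) p μ ≤
      ENNReal.ofReal (k + 1) *
        (eLpNorm u (r * ENNReal.ofReal k) μ ^ k + eLpNorm v (r * ENNReal.ofReal k) μ ^ k) *
        eLpNorm (fun y => u y - v y) q μ := by
  have hpow : Continuous fun t : ℝ => t ^ k := Real.continuous_rpow_const hk.le
  have hu' : AEStronglyMeasurable (fun y => |u y| ^ k) μ := hpow.comp_aestronglyMeasurable hu.norm
  have hv' : AEStronglyMeasurable (fun y => |v y| ^ k) μ := hpow.comp_aestronglyMeasurable hv.norm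
  have hweight : eLpNorm ((fun y => |u y| ^ k) + fun y => |v y| ^ k) r μ ≤
      eLpNorm u (r * ENNReal.ofReal k) μ ^ k + eLpNorm v (r * ENNReal.ofReal k) μ ^ k := by
    simpa only [← Real.norm_eq_abs, eLpNorm_norm_rpow _ hk] using eLpNorm_add_le hu' hv' hr
  calc eLpNorm (fun y => |u y| ^ k * u y - |v y| ^ k * v y) p μ
      ≤ eLpNorm ((k + 1) • (((fun y => |u y| ^ k) + fun y => |v y| ^ k) •
          fun y => u y - v y)) p μ := by
        refine eLpNorm_mono fun y => ?_
        simp only [Pi.smul_apply, Pi.mul_apply, Pi.add_apply, smul_eq_mul, Real.norm_eq_abs,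
          abs_mul,
          abs_of_nonneg (by linarith : (0 : ℝ) ≤ k + 1),
          abs_of_nonneg (by positivity : 0 ≤ |u y| ^ k + |v y| ^ k), ← mul_assoc]
        exact Real.abs_abs_rpow_mul_sub_abs_rpow_mul_le hk.le (u y) (v y)
    _ ≤ ENNReal.ofReal (k + 1) * (eLpNorm ((fun y => |u y| ^ k) + fun y => |v y| ^ k) r μ *
          eLpNorm (fun y => u y - v y) q μ) := by
        rw [eLpNorm_const_smul, Real.enorm_eq_ofReal (by linarith)]
        gcongr
        exact eLpNorm_smul_le_mul_eLpNorm (hu.sub hv) (hu'.add hv')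
    _ ≤ _ := by
        rw [mul_assoc]
        gcongr

end Lp

theorem eLpNorm_comp_add_right {G E : Type*} [AddGroup G] [MeasurableSpace G] [MeasurableAdd G]
    [NormedAddCommGroup E] {μ : Measure G} [μ.IsAddRightInvariant] {u : G → E}
    (hu : AEStronglyMeasurable u μ) (x : G) (p : ℝ≥0∞) :
    eLpNorm (fun y => u (y + x)) p μ = eLpNorm u p μ :=
  eLpNorm_comp_measurePreserving hu (measurePreserving_add_right μ x)

theorem lintegral_rpow_div_le_of_le_mul {β : Type*} [MeasurableSpace β] {ν : Measure β}
    {F G w : β → ℝ≥0∞} {c : ℝ≥0∞} {p : ℝ} (hc : c ≠ ∞) (hp : 0 ≤ p)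
    (h : ∀ x, F x ≤ c * G x) :
    ∫⁻ x, F x ^ p / w x ∂ν ≤ c ^ p * ∫⁻ x, G x ^ p / w x ∂ν :=
  calc ∫⁻ x, F x ^ p / w x ∂ν ≤ ∫⁻ x, c ^ p * (G x ^ p / w x) ∂ν :=
        lintegral_mono fun x => by
          rw [← mul_div_assoc, ← ENNReal.mul_rpow_of_nonneg _ _ hp]
          gcongr
          exact h x
    _ = c ^ p * ∫⁻ x, G x ^ p / w x ∂ν :=
        lintegral_const_mul' _ _ (ENNReal.rpow_ne_top_of_nonneg hp hc)

theorem stmt_3_general (m s p q r : ℝ) (hm : 2 < m)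
    (hp : 1 < p) (hq : 1 < q) (hr : 1 < r)
    (hpqr : 1 / p = 1 / q + 1 / r) :
    ∃ C : ℝ, 0 < C ∧
      ∀ f : EuclideanSpace ℝ (Fin 2) → ℝ, Measurable f →
        MemLp f (ENNReal.ofReal q) volume →
        MemLp f (ENNReal.ofReal (r * (m - 2))) volume →
        ∫⁻ x : EuclideanSpace ℝ (Fin 2),
            (eLpNorm (fun y => |f (y + x)| ^ (m - 2) * f (y + x)
                - |f y| ^ (m - 2) * f y) (ENNReal.ofReal p) volume) ^ p /
              ENNReal.ofReal (‖x‖ ^ (2 + s * p)) ≤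
          ENNReal.ofReal C ^ p *
            eLpNorm f (ENNReal.ofReal (r * (m - 2))) volume ^ ((m - 2) * p) *
            ∫⁻ x : EuclideanSpace ℝ (Fin 2),
              (eLpNorm (fun y => f (y + x) - f y) (ENNReal.ofReal q) volume) ^ p /
                ENNReal.ofReal (‖x‖ ^ (2 + s * p)) := by
  have hk : 0 < m - 2 := by linarith
  have : ENNReal.HolderTriple (ENNReal.ofReal r) (ENNReal.ofReal q) (ENNReal.ofReal p) :=
    Real.HolderTriple.ennrealOfReal
      ⟨by simp only [one_div] at hpqr; linarith, by linarith, by linarith⟩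
  refine ⟨2 * (m - 2 + 1), by linarith, fun f hf _ hfN => ?_⟩
  set N := eLpNorm f (ENNReal.ofReal (r * (m - 2))) volume
  have hN : N ≠ ∞ := hfN.eLpNorm_ne_top
  have hdiff : ∀ x, eLpNorm (fun y => |f (y + x)| ^ (m - 2) * f (y + x) - |f y| ^ (m - 2) * f y)
        (ENNReal.ofReal p) volume ≤
      ENNReal.ofReal (m - 2 + 1) * (N ^ (m - 2) + N ^ (m - 2)) *
        eLpNorm (fun y => f (y + x) - f y) (ENNReal.ofReal q) volume := by
    intro x
    have h := eLpNorm_abs_rpow_mul_sub_le hk (p := ENNReal.ofReal p) (q := ENNReal.ofReal q)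
      (ENNReal.one_le_ofReal.2 hr.le)
      (hf.comp (measurable_add_const x)).aestronglyMeasurable hf.aestronglyMeasurable
      (μ := volume)
    rwa [← ENNReal.ofReal_mul (by linarith), Function.comp_def,
      eLpNorm_comp_add_right hf.aestronglyMeasurable] at h
  have hconst : (ENNReal.ofReal (m - 2 + 1) * (N ^ (m - 2) + N ^ (m - 2))) ^ p =
      ENNReal.ofReal (2 * (m - 2 + 1)) ^ p * N ^ ((m - 2) * p) := by
    rw [← two_mul, ENNReal.ofReal_mul zero_le_two, ENNReal.ofReal_ofNat, ENNReal.rpow_mul,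
      ← ENNReal.mul_rpow_of_nonneg _ _ (by linarith), mul_left_comm, mul_assoc]
  rw [← hconst]
  exact lintegral_rpow_div_le_of_le_mul (by finiteness) (by linarith) hdiff

/-- Bilinear estimate (2.5) of Lemma 2.4, in difference-characterization form:
for `m > 2`, `s ∈ (0,1)`, `p, q, r ∈ (1,∞)` with `1/p = 1/q + 1/r`, there is a
constant `C = C(m) > 0` such that, writing `F = |f|^{m-2} f`,
`∫ ‖F(·+x) - F‖_{L^p}^p / |x|^{2+sp} dx
  ≤ C^p ‖f‖_{L^{r(m-2)}}^{(m-2)p} ∫ ‖f(·+x) - f‖_{L^q}^p / |x|^{2+sp} dx`. -/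
theorem stmt_3 (m s p q r : ℝ) (hm : 2 < m) (hs1 : 0 < s) (hs2 : s < 1)
    (hp : 1 < p) (hq : 1 < q) (hr : 1 < r)
    (hpqr : 1 / p = 1 / q + 1 / r) :
    ∃ C : ℝ, 0 < C ∧
      ∀ f : EuclideanSpace ℝ (Fin 2) → ℝ, Measurable f →
        MemLp f (ENNReal.ofReal q) volume →
        MemLp f (ENNReal.ofReal (r * (m - 2))) volume →
        ∫⁻ x : EuclideanSpace ℝ (Fin 2),
            (eLpNorm (fun y => |f (y + x)| ^ (m - 2) * f (y + x)
                - |f y| ^ (m - 2) * f y) (ENNReal.ofReal p) volume) ^ p /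
              ENNReal.ofReal (‖x‖ ^ (2 + s * p)) ≤
          ENNReal.ofReal C ^ p *
            eLpNorm f (ENNReal.ofReal (r * (m - 2))) volume ^ ((m - 2) * p) *
            ∫⁻ x : EuclideanSpace ℝ (Fin 2),
              (eLpNorm (fun y => f (y + x) - f y) (ENNReal.ofReal q) volume) ^ p /
                ENNReal.ofReal (‖x‖ ^ (2 + s * p)) :=
  stmt_3_general m s p q r hm hp hq hr hpqr
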